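/- arXiv:1112.0784 — 3 statements merged into one kernel-verified Lean document; each statement's English description precedes it below -/
import Mathlib

section
/- In a finite directed acyclic graph, if a vertex v has at least j distinct in-neighbors (vertices u with an arc (u,v)), each of size at least s, then size(v) ≥ s + j. -/
/-!
Choose an in-neighbour `u₀` of `v` that no other in-neighbour reaches; one of minimal size
will do, since in an acyclic graph reaching a different vertex strictly increases the size.
Then the ancestors of `u₀`, the remaining in-neighbours and `v` itself are pairwise distinct
ancestors of `v`, so `size v ≥ size u₀ + (j - 1) + 1`.
-/

/-- The size of a vertex `w` in the digraph with arc relation `r`: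
the number of vertices `u` such that `w` is reachable from `u`
(including `w` itself via the trivial path). -/
noncomputable def vertexSize {V : Type*} (r : V → V → Prop) (w : V) : ℕ :=
  {u | Relation.ReflTransGen r u w}.ncard

section Acyclic

variable {V : Type*} {r : V → V → Prop}

lemma reflTransGen_antisymm_of_acyclic (hacyc : ∀ v w, r v w → ¬ Relation.ReflTransGen r w v)
    {a b : V} (hab : Relation.ReflTransGen r a b) (hba : Relation.ReflTransGen r b a) :
    a = b := by
  rcases hab.cases_tail with h | ⟨c, hac, hcb⟩
  · exact h.symm
  · exact (hacyc c b hcb (hba.trans hac)).elim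

lemma vertexSize_lt_of_reflTransGen [Finite V]
    (hacyc : ∀ v w, r v w → ¬ Relation.ReflTransGen r w v)
    {t u : V} (htu : Relation.ReflTransGen r t u) (hne : t ≠ u) :
    vertexSize r t < vertexSize r u :=
  Set.ncard_lt_ncard
    ⟨fun _ hx => hx.trans htu,
      fun hsub => hne (reflTransGen_antisymm_of_acyclic hacyc htu (hsub .refl))⟩
    (Set.toFinite _)

lemma exists_mem_minimal_reflTransGen [Finite V]
    (hacyc : ∀ v w, r v w → ¬ Relation.ReflTransGen r w v)
    {T : Finset V} (hT : T.Nonempty) :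
    ∃ u ∈ T, ∀ t ∈ T, Relation.ReflTransGen r t u → t = u := by
  obtain ⟨u, hu, hmin⟩ := T.exists_min_image (vertexSize r) hT
  refine ⟨u, hu, fun t ht htu => by_contra fun hne => ?_⟩
  exact (hmin t ht).not_gt (vertexSize_lt_of_reflTransGen hacyc htu hne)

lemma vertexSize_add_card_le [Finite V]
    (hacyc : ∀ v w, r v w → ¬ Relation.ReflTransGen r w v)
    {v u₀ : V} {T : Finset V} (hu₀ : u₀ ∈ T)
    (hmin : ∀ t ∈ T, Relation.ReflTransGen r t u₀ → t = u₀) (hTarc : ∀ u ∈ T, r u v) :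
    vertexSize r u₀ + T.card ≤ vertexSize r v := by
  classical
  set A : Set V := {u | Relation.ReflTransGen r u u₀}
  set B : Finset V := insert v (T.erase u₀)
  have hvT : v ∉ T := fun hv => hacyc v v (hTarc v hv) .refl
  have hBcard : B.card = T.card := by
    rw [Finset.card_insert_of_notMem (fun h => hvT (Finset.mem_of_mem_erase h)),
      Finset.card_erase_add_one hu₀]
  have hdisj : Disjoint A B := by
    refine Set.disjoint_left.mpr fun x hxA hxB => ?_
    rcases Finset.mem_insert.mp hxB with rfl | hxT
    · exact hacyc u₀ x (hTarc u₀ hu₀) hxA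
    · exact Finset.ne_of_mem_erase hxT (hmin x (Finset.mem_of_mem_erase hxT) hxA)
  have hsub : A ∪ B ⊆ {u | Relation.ReflTransGen r u v} := by
    rintro x (hxA | hxB)
    · exact Relation.ReflTransGen.tail hxA (hTarc u₀ hu₀)
    · rcases Finset.mem_insert.mp hxB with rfl | hxT
      · exact .refl
      · exact .single (hTarc x (Finset.mem_of_mem_erase hxT))
  calc vertexSize r u₀ + T.card = (A ∪ B).ncard := by
        rw [Set.ncard_union_eq hdisj (Set.toFinite _) (Set.toFinite _), Set.ncard_coe_finset,
          hBcard]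
        rfl
    _ ≤ vertexSize r v := Set.ncard_le_ncard hsub (Set.toFinite _)

end Acyclic

/-- In a finite directed acyclic graph, if a vertex `v` has at least `j ≥ 1`
distinct in-neighbors, each of size at least `s`, then `size(v) ≥ s + j`. -/
theorem size_ge_of_preds {V : Type*} [Fintype V] (r : V → V → Prop)
    (hacyc : ∀ v w, r v w → ¬ Relation.ReflTransGen r w v)
    (v : V) (s j : ℕ) (hj : 1 ≤ j)
    (T : Finset V) (hTcard : j ≤ T.card)
    (hTarc : ∀ u ∈ T, r u v)
    (hTsize : ∀ u ∈ T, s ≤ vertexSize r u) :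
    s + j ≤ vertexSize r v := by
  obtain ⟨u₀, hu₀, hmin⟩ :=
    exists_mem_minimal_reflTransGen hacyc (Finset.card_pos.mp (by omega) : T.Nonempty)
  have hsize := vertexSize_add_card_le hacyc hu₀ hmin hTarc
  have hs := hTsize u₀ hu₀
  omega
end

section
/- Let r be an acyclic directed graph on V, let v ≠ w be vertices, and let r' be the graph obtained from r by adding the arc (v,w). Then the set of vertices mutually reachable with v in r' (the strong component of v in r') is exactly {v} ∪ {x : x is reachable from w in r and v is reachable from x in r}. -/
/-!
A path that uses the new arc `(v, w)` must pass from `v` to `w`, so every path of the enlarged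
graph is either a path of `r` or splits as `x ⇝ v` followed by `w ⇝ y` in `r`. Hence `x` lies
in the strong component of `v` iff `x ⇝ v` in `r` and either `v ⇝ x` in `r` or `w ⇝ x` in `r`;
in an acyclic graph the first alternative forces `x = v`.
-/

namespace Relation

variable {V : Type*} {r : V → V → Prop}

theorem ReflTransGen.eq_of_acyclic (hacyc : ∀ a b, r a b → ¬ ReflTransGen r b a) {x y : V}
    (hxy : ReflTransGen r x y) (hyx : ReflTransGen r y x) : x = y := by
  rcases hxy.cases_head with rfl | ⟨z, hxz, hzy⟩
  · rfl
  · exact absurd (hzy.trans hyx) (hacyc x z hxz)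

theorem ReflTransGen.of_insert_arc {v w x y : V}
    (h : ReflTransGen (fun a b => r a b ∨ (a = v ∧ b = w)) x y) :
    ReflTransGen r x y ∨ (ReflTransGen r x v ∧ ReflTransGen r w y) := by
  induction h with
  | refl => exact .inl .refl
  | tail _ hbc ih =>
    rcases hbc with hbc | ⟨rfl, rfl⟩
    · exact ih.imp (·.tail hbc) fun ⟨hxv, hwb⟩ => ⟨hxv, hwb.tail hbc⟩
    · exact .inr ⟨ih.elim id And.left, .refl⟩

theorem ReflTransGen.to_insert_arc {v w x y : V} (h : ReflTransGen r x y) :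
    ReflTransGen (fun a b => r a b ∨ (a = v ∧ b = w)) x y :=
  ReflTransGen.mono (fun _ _ => Or.inl) _ _ h

end Relation

open Relation in
theorem strong_component_of_insert_arc_general {V : Type*} (r : V → V → Prop)
    (hacyc : ∀ v w, r v w → ¬ Relation.ReflTransGen r w v)
    (v w : V) :
    {x | Relation.ReflTransGen (fun a b => r a b ∨ (a = v ∧ b = w)) v x ∧
         Relation.ReflTransGen (fun a b => r a b ∨ (a = v ∧ b = w)) x v} =
      {v} ∪ {x | Relation.ReflTransGen r w x ∧ Relation.ReflTransGen r x v} := by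
  ext x
  simp only [Set.mem_ofPred_eq, Set.mem_union, Set.mem_singleton_iff]
  constructor
  · rintro ⟨hvx, hxv⟩
    have hxv : ReflTransGen r x v := hxv.of_insert_arc.elim id And.left
    rcases hvx.of_insert_arc with hvx | ⟨-, hwx⟩
    · exact .inl (hvx.eq_of_acyclic hacyc hxv).symm
    · exact .inr ⟨hwx, hxv⟩
  · rintro (rfl | ⟨hwx, hxv⟩)
    · exact ⟨.refl, .refl⟩
    · exact ⟨.head (.inr ⟨rfl, rfl⟩) hwx.to_insert_arc, hxv.to_insert_arc⟩

/-- Let `r` be acyclic, `v ≠ w`, and `r'` the graph obtained by adding the arc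
`(v,w)`. The strong component of `v` in `r'` (the set of vertices mutually
reachable with `v` in `r'`) is exactly
`{v} ∪ {x | x is reachable from w in r and v is reachable from x in r}`. -/
theorem strong_component_of_insert_arc {V : Type*} (r : V → V → Prop)
    (hacyc : ∀ v w, r v w → ¬ Relation.ReflTransGen r w v)
    (v w : V) (hvw : v ≠ w) :
    {x | Relation.ReflTransGen (fun a b => r a b ∨ (a = v ∧ b = w)) v x ∧
         Relation.ReflTransGen (fun a b => r a b ∨ (a = v ∧ b = w)) x v} =
      {v} ∪ {x | Relation.ReflTransGen r w x ∧ Relation.ReflTransGen r x v} :=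
  strong_component_of_insert_arc_general r hacyc v w
end

section
/- Let r be an acyclic directed graph on V, let v ≠ w be vertices, and let r' be the graph obtained from r by adding the arc (v,w). Then for any vertex x that is not mutually reachable with v in r', the strong component of x in r' is the singleton {x}. In other words, every strong component of r' other than the one containing v is trivial. -/
/-!
A closed walk in `r'` that avoids the new arc `(v, w)` is a closed walk in `r`, hence trivial by
acyclicity. A closed walk through `x` that does use the new arc passes through `v`, so `x` and `v`
are mutually reachable in `r'`.
-/

open Relation

section InsertArc

variable {V : Type*}

abbrev insertArc (r : V → V → Prop) (v w : V) : V → V → Prop :=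
  fun a b => r a b ∨ (a = v ∧ b = w)

theorem reflTransGen_insertArc_of_reflTransGen {r : V → V → Prop} (v w : V) {a b : V}
    (h : ReflTransGen r a b) : ReflTransGen (insertArc r v w) a b :=
  ReflTransGen.mono (fun _ _ => Or.inl) _ _ h

theorem reflTransGen_insertArc_cases {r : V → V → Prop} {v w a b : V}
    (h : ReflTransGen (insertArc r v w) a b) :
    ReflTransGen r a b ∨ (ReflTransGen r a v ∧ ReflTransGen (insertArc r v w) w b) := by
  induction h with
  | refl => exact Or.inl .refl
  | tail _ hbc ih =>
    rcases hbc with hbc | ⟨rfl, rfl⟩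
    · rcases ih with hab | ⟨hav, hwb⟩
      · exact Or.inl (hab.tail hbc)
      · exact Or.inr ⟨hav, hwb.tail (Or.inl hbc)⟩
    · rcases ih with hab | ⟨hav, -⟩
      · exact Or.inr ⟨hab, .refl⟩
      · exact Or.inr ⟨hav, .refl⟩

theorem reflTransGen_insertArc_left_of_right {r : V → V → Prop} {v w a : V}
    (h : ReflTransGen (insertArc r v w) w a) : ReflTransGen (insertArc r v w) v a :=
  h.head (Or.inr ⟨rfl, rfl⟩)

theorem eq_of_reflTransGen_of_reflTransGen {r : V → V → Prop}
    (hacyc : ∀ a b, r a b → ¬ ReflTransGen r b a) {a b : V}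
    (hab : ReflTransGen r a b) (hba : ReflTransGen r b a) : a = b := by
  rcases hab.cases_head with rfl | ⟨c, hac, hcb⟩
  · rfl
  · exact absurd (hcb.trans hba) (hacyc a c hac)

theorem eq_or_mutual_reflTransGen_insertArc_left {r : V → V → Prop}
    (hacyc : ∀ a b, r a b → ¬ ReflTransGen r b a) {v w x y : V}
    (hxy : ReflTransGen (insertArc r v w) x y) (hyx : ReflTransGen (insertArc r v w) y x) :
    x = y ∨ (ReflTransGen (insertArc r v w) v x ∧ ReflTransGen (insertArc r v w) x v) := by
  rcases reflTransGen_insertArc_cases hxy with hxy' | ⟨hxv, hwy⟩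
  · rcases reflTransGen_insertArc_cases hyx with hyx' | ⟨hyv, hwx⟩
    · exact Or.inl (eq_of_reflTransGen_of_reflTransGen hacyc hxy' hyx')
    · exact Or.inr ⟨reflTransGen_insertArc_left_of_right hwx,
        hxy.trans (reflTransGen_insertArc_of_reflTransGen v w hyv)⟩
  · exact Or.inr ⟨reflTransGen_insertArc_left_of_right (hwy.trans hyx),
      reflTransGen_insertArc_of_reflTransGen v w hxv⟩

end InsertArc

theorem strong_component_singleton_of_insert_arc_general {V : Type*} (r : V → V → Prop)
    (hacyc : ∀ v w, r v w → ¬ Relation.ReflTransGen r w v)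
    (v w : V) (x : V)
    (hx : ¬ (Relation.ReflTransGen (fun a b => r a b ∨ (a = v ∧ b = w)) v x ∧
             Relation.ReflTransGen (fun a b => r a b ∨ (a = v ∧ b = w)) x v)) :
    {y | Relation.ReflTransGen (fun a b => r a b ∨ (a = v ∧ b = w)) x y ∧
         Relation.ReflTransGen (fun a b => r a b ∨ (a = v ∧ b = w)) y x} = {x} := by
  ext y
  constructor
  · rintro ⟨hxy, hyx⟩
    exact ((eq_or_mutual_reflTransGen_insertArc_left hacyc hxy hyx).resolve_right hx).symm
  · rintro rfl
    exact ⟨.refl, .refl⟩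

/-- Let `r` be acyclic, `v ≠ w`, and `r'` the graph obtained by adding the arc
`(v,w)`. Every strong component of `r'` other than the one containing `v` is
trivial: if `x` is not mutually reachable with `v` in `r'`, then the strong
component of `x` in `r'` is the singleton `{x}`. -/
theorem strong_component_singleton_of_insert_arc {V : Type*} (r : V → V → Prop)
    (hacyc : ∀ v w, r v w → ¬ Relation.ReflTransGen r w v)
    (v w : V) (hvw : v ≠ w) (x : V)
    (hx : ¬ (Relation.ReflTransGen (fun a b => r a b ∨ (a = v ∧ b = w)) v x ∧
             Relation.ReflTransGen (fun a b => r a b ∨ (a = v ∧ b = w)) x v)) :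
    {y | Relation.ReflTransGen (fun a b => r a b ∨ (a = v ∧ b = w)) x y ∧
         Relation.ReflTransGen (fun a b => r a b ∨ (a = v ∧ b = w)) y x} = {x} :=
  strong_component_singleton_of_insert_arc_general r hacyc v w x hx
end
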